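/- Every interval in the Tamari lattice admits a unique maximal decomposition I = I_1 / I_2 / ... / I_k into intervals, where the product of intervals is defined componentwise on minima and maxima via the left-grafting operation /; moreover an interval is indecomposable if and only if its minimum is an indecomposable tree. -/

import Mathlib

/-- Planar binary trees, counted by internal nodes. -/
inductive PBT where
  | leaf : PBT
  | node : PBT → PBT → PBT
deriving DecidableEq

namespace PBT

/-- Number of internal nodes. -/
def size : PBT → ℕ
  | leaf => 0
  | node l r => size l + size r + 1

/-- One rotation step, going up in the Tamari order: a right comb
configuration `a·(b·c)` is replaced by a left comb configuration `(a·b)·c`,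
possibly deep inside the tree. -/
inductive Rot : PBT → PBT → Prop
  | rotate (a b c : PBT) : Rot (node a (node b c)) (node (node a b) c)
  | left {l l' : PBT} (r : PBT) : Rot l l' → Rot (node l r) (node l' r)
  | right (l : PBT) {r r' : PBT} : Rot r r' → Rot (node l r) (node l r')

/-- The Tamari order: the reflexive-transitive closure of rotation. -/
def le (S T : PBT) : Prop := Relation.ReflTransGen Rot S T

/-- The unique tree with one internal node. -/
def Y : PBT := node leaf leaf

/-- `S / T`: graft the root of `S` onto the leftmost leaf of `T`. -/
def graftL : PBT → PBT → PBT
  | S, leaf => S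
  | S, node l r => node (graftL S l) r

/-- `T₁ / T₂ / ⋯ / T_k` for a list of trees (the empty graft is the trivial tree). -/
def listGraft (L : List PBT) : PBT := L.foldr graftL leaf

/-- A (nontrivial) tree is indecomposable if it is not of the form `S / T`
with `S`, `T` both nontrivial. -/
def Indec (T : PBT) : Prop :=
  T ≠ leaf ∧ ¬ ∃ S U : PBT, S ≠ leaf ∧ U ≠ leaf ∧ graftL S U = T

end PBT

/-- A pair `(S,T)` is a Tamari interval when `S ≤ T`. -/
def isItv (p : PBT × PBT) : Prop := PBT.le p.1 p.2

/-- Grafting of intervals, componentwise on minima and maxima: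
`J/K = [min J / min K, max J / max K]`. -/
def igraft (p q : PBT × PBT) : PBT × PBT := (PBT.graftL p.1 q.1, PBT.graftL p.2 q.2)

/-- `I₁ / I₂ / ⋯ / I_k` for a list of intervals. -/
def ilistGraft (L : List (PBT × PBT)) : PBT × PBT := L.foldr igraft (PBT.leaf, PBT.leaf)

/-- An interval is indecomposable if it is nontrivial and is not the graft `J/K`
of two nontrivial intervals. -/
def IndecItv (p : PBT × PBT) : Prop :=
  isItv p ∧ p.1 ≠ PBT.leaf ∧
    ¬ ∃ q r : PBT × PBT, isItv q ∧ isItv r ∧ q.1 ≠ PBT.leaf ∧ r.1 ≠ PBT.leaf ∧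
      igraft q r = p

/-!
A tree `node l r` is the graft `l / node leaf r`, and it is indecomposable exactly when `l` is a
leaf. A rotation of `S / K` takes place inside `S` or inside `K` (a rotation at the root of `K`
only moves `S` along), so every upper bound of `S / K` in the Tamari order is `S' / K'` with
`S ≤ S'` and `K ≤ K'`. Peeling off the factor `[node leaf r, K']` along the left branch of the
minimum gives a decomposition of any interval into indecomposable ones. For uniqueness, the
minimum `J.1 / node leaf r = node J.1 r` determines `J.1` and `r`, and since `J.1` and `J.2`
have the same size the maximum `J.2 / K'` determines `J.2` and `K'`.
-/

namespace PBT

@[simp]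
lemma graftL_node_leaf (A r : PBT) : graftL A (node leaf r) = node A r := rfl

@[simp]
lemma graftL_leaf_left (T : PBT) : graftL leaf T = T := by
  induction T with
  | leaf => rfl
  | node l r ih => simp [graftL, ih]

lemma graftL_assoc (A B C : PBT) : graftL (graftL A B) C = graftL A (graftL B C) := by
  induction C with
  | leaf => rfl
  | node l r ih => simp [graftL, ih]

lemma size_graftL (S T : PBT) : size (graftL S T) = size S + size T := by
  induction T with
  | leaf => simp [graftL, size]
  | node l r ih => simp only [graftL, size, ih]; omega

lemma size_eq_zero {T : PBT} : size T = 0 ↔ T = leaf := by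
  cases T <;> simp [size]

@[simp]
lemma graftL_eq_leaf {S T : PBT} : graftL S T = leaf ↔ S = leaf ∧ T = leaf := by
  simp only [← size_eq_zero, size_graftL, Nat.add_eq_zero_iff]

lemma graftL_inj_of_size_eq {A A' : PBT} (hA : size A = size A') :
    ∀ {B B' : PBT}, graftL A B = graftL A' B' → A = A' ∧ B = B'
  | leaf, leaf, h => ⟨h, rfl⟩
  | node l r, node l' r', h => by
    simp only [graftL, node.injEq] at h
    obtain ⟨rfl, rfl⟩ := graftL_inj_of_size_eq hA h.1
    exact ⟨rfl, h.2 ▸ rfl⟩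
  | leaf, node _ _, h | node _ _, leaf, h => by
    have := congrArg size h
    simp only [size_graftL, size] at this
    omega

lemma indec_iff_eq_node_leaf {T : PBT} : Indec T ↔ ∃ r, T = node leaf r := by
  constructor
  · rintro ⟨hT, hdec⟩
    match T, hT with
    | node leaf r, _ => exact ⟨r, rfl⟩
    | node (node a b) r, _ => exact absurd ⟨node a b, node leaf r, by simp, by simp, rfl⟩ hdec
  · rintro ⟨r, rfl⟩
    refine ⟨by simp, ?_⟩
    rintro ⟨S, U, hS, hU, hSU⟩
    match U, hU with
    | node l u, _ =>
      simp only [graftL, node.injEq, graftL_eq_leaf] at hSU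
      exact hS hSU.1.1

lemma Rot.size_eq {S T : PBT} (h : Rot S T) : size S = size T := by
  induction h <;> simp only [size] at * <;> omega

lemma le.size_eq {S T : PBT} (h : le S T) : size S = size T := by
  induction h with
  | refl => rfl
  | tail _ h ih => exact ih.trans h.size_eq

lemma le_node_left {l l' : PBT} (r : PBT) (h : le l l') : le (node l r) (node l' r) :=
  Relation.ReflTransGen.lift (node · r) (fun _ _ h => Rot.left r h) _ _ h

lemma Rot.exists_graftL {A : PBT} :
    ∀ {B X : PBT}, Rot (graftL A B) X → ∃ A' B', X = graftL A' B' ∧ le A A' ∧ le B B'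
  | leaf, X, h => ⟨X, leaf, rfl, .single h, .refl⟩
  | node l r, X, h => by
    rw [graftL] at h
    cases h with
    | rotate _ b c => exact ⟨A, node (node l b) c, rfl, .refl, .single (.rotate l b c)⟩
    | left _ h =>
      obtain ⟨A', l', rfl, hA, hl⟩ := Rot.exists_graftL h
      exact ⟨A', node l' r, rfl, hA, le_node_left r hl⟩
    | right _ h => exact ⟨A, node l _, rfl, .refl, .single (.right l h)⟩

lemma le.exists_graftL {A B X : PBT} (h : le (graftL A B) X) :
    ∃ A' B', X = graftL A' B' ∧ le A A' ∧ le B B' := by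
  induction h with
  | refl => exact ⟨A, B, rfl, .refl, .refl⟩
  | tail _ hrot ih =>
    obtain ⟨A', B', rfl, hA, hB⟩ := ih
    obtain ⟨A'', B'', rfl, hA', hB'⟩ := hrot.exists_graftL
    exact ⟨A'', B'', rfl, hA.trans hA', hB.trans hB'⟩

end PBT

open PBT

lemma igraft_assoc (J K M : PBT × PBT) : igraft (igraft J K) M = igraft J (igraft K M) := by
  simp [igraft, graftL_assoc]

lemma ilistGraft_append_singleton (L : List (PBT × PBT)) (q : PBT × PBT) :
    ilistGraft (L ++ [q]) = igraft (ilistGraft L) q := by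
  induction L with
  | nil => simp [ilistGraft, igraft, graftL]
  | cons J L ih =>
    simp only [ilistGraft, List.cons_append, List.foldr_cons] at ih ⊢
    rw [ih, igraft_assoc]

lemma size_ilistGraft_fst_eq_snd {L : List (PBT × PBT)} (hL : ∀ q ∈ L, isItv q) :
    size (ilistGraft L).1 = size (ilistGraft L).2 := by
  induction L with
  | nil => rfl
  | cons J L ih =>
    simp only [ilistGraft, List.foldr_cons, List.forall_mem_cons] at hL ih ⊢
    simp only [igraft, size_graftL, le.size_eq hL.1, ih hL.2]

lemma indecItv_iff_indec_fst {p : PBT × PBT} (hp : isItv p) : IndecItv p ↔ Indec p.1 := by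
  constructor
  · rintro ⟨-, hp1, hdec⟩
    refine ⟨hp1, fun ⟨S, U, hS, hU, hSU⟩ => ?_⟩
    obtain ⟨S', U', hp2, hSS', hUU'⟩ := le.exists_graftL (hSU ▸ hp : le (graftL S U) p.2)
    exact hdec ⟨(S, S'), (U, U'), hSS', hUU', hS, hU, Prod.ext hSU hp2.symm⟩
  · rintro ⟨hp1, hdec⟩
    exact ⟨hp, hp1, fun ⟨q, r, _, _, hq1, hr1, hqr⟩ =>
      hdec ⟨q.1, r.1, hq1, hr1, congrArg Prod.fst hqr⟩⟩

lemma exists_indecItv_decomposition :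
    ∀ {S T : PBT}, le S T → ∃ L, (∀ q ∈ L, IndecItv q) ∧ ilistGraft L = (S, T)
  | leaf, T, h => ⟨[], by simp, by simp [ilistGraft, size_eq_zero.1 (h.size_eq.symm)]⟩
  | node l r, _, h => by
    obtain ⟨T₁, T₂, rfl, h₁, h₂⟩ := le.exists_graftL (graftL_node_leaf l r ▸ h)
    obtain ⟨L, hL, hLT⟩ := exists_indecItv_decomposition h₁
    have hlast : IndecItv (node leaf r, T₂) :=
      (indecItv_iff_indec_fst (p := (node leaf r, T₂)) h₂).2
        (indec_iff_eq_node_leaf.2 ⟨r, rfl⟩)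
    refine ⟨L ++ [(node leaf r, T₂)], ?_, ?_⟩
    · simpa [or_imp, forall_and, hlast] using hL
    · rw [ilistGraft_append_singleton, hLT]
      rfl

lemma igraft_cancel {J J' q q' : PBT × PBT}
    (hJ : size J.1 = size J.2) (hJ' : size J'.1 = size J'.2)
    (hq : IndecItv q) (hq' : IndecItv q') (h : igraft J q = igraft J' q') : J = J' ∧ q = q' := by
  obtain ⟨r, hr⟩ := indec_iff_eq_node_leaf.1 ((indecItv_iff_indec_fst hq.1).1 hq)
  obtain ⟨r', hr'⟩ := indec_iff_eq_node_leaf.1 ((indecItv_iff_indec_fst hq'.1).1 hq')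
  simp only [igraft, Prod.mk.injEq, hr, hr', graftL_node_leaf, node.injEq] at h
  obtain ⟨⟨hJ1, rfl⟩, h2⟩ := h
  obtain ⟨hJ2, hq2⟩ := graftL_inj_of_size_eq (by rw [← hJ, ← hJ', hJ1]) h2
  exact ⟨Prod.ext hJ1 hJ2, Prod.ext (hr.trans hr'.symm) hq2⟩

lemma ilistGraft_fst_ne_leaf {L : List (PBT × PBT)} {q : PBT × PBT} (hq : IndecItv q) :
    (ilistGraft (L ++ [q])).1 ≠ leaf := by
  simp [ilistGraft_append_singleton, igraft, hq.2.1]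

lemma eq_of_ilistGraft_eq {L M : List (PBT × PBT)} (hL : ∀ q ∈ L, IndecItv q)
    (hM : ∀ q ∈ M, IndecItv q) (h : ilistGraft L = ilistGraft M) : L = M := by
  induction L using List.reverseRecOn generalizing M with
  | nil =>
    cases M using List.reverseRecOn with
    | nil => rfl
    | append_singleton M q' =>
      exact absurd (congrArg Prod.fst h).symm (ilistGraft_fst_ne_leaf (hM q' (by simp)))
  | append_singleton L q ih =>
    cases M using List.reverseRecOn with
    | nil => exact absurd (congrArg Prod.fst h) (ilistGraft_fst_ne_leaf (hL q (by simp)))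
    | append_singleton M q' =>
      simp only [List.mem_append, List.mem_singleton, or_imp, forall_and, forall_eq] at hL hM
      rw [ilistGraft_append_singleton, ilistGraft_append_singleton] at h
      obtain ⟨hLM, rfl⟩ := igraft_cancel (size_ilistGraft_fst_eq_snd fun q hq => (hL.1 q hq).1)
        (size_ilistGraft_fst_eq_snd fun q hq => (hM.1 q hq).1) hL.2 hM.2 h
      rw [ih hL.1 hM.1 hLM]

theorem interval_unique_maximal_decomposition_general (p : PBT × PBT)
    (hp : isItv p) :
    (∃! L : List (PBT × PBT), (∀ q ∈ L, IndecItv q) ∧ ilistGraft L = p) ∧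
    (IndecItv p ↔ PBT.Indec p.1) := by
  obtain ⟨L, hL, hLp⟩ := exists_indecItv_decomposition hp
  refine ⟨⟨L, ⟨hL, hLp⟩, fun M ⟨hM, hMp⟩ => ?_⟩, indecItv_iff_indec_fst hp⟩
  exact eq_of_ilistGraft_eq hM hL (hMp.trans hLp.symm)

/-- Every Tamari interval admits a unique maximal decomposition
`I = I₁ / ⋯ / I_k` into indecomposable intervals; moreover an interval is
indecomposable if and only if its minimum is an indecomposable tree. -/
theorem interval_unique_maximal_decomposition (p : PBT × PBT)
    (hp : isItv p) (hp1 : p.1 ≠ PBT.leaf) :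
    (∃! L : List (PBT × PBT), (∀ q ∈ L, IndecItv q) ∧ ilistGraft L = p) ∧
    (IndecItv p ↔ PBT.Indec p.1) :=
  interval_unique_maximal_decomposition_general p hp
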